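/- Let a, b > 0, k ≥ 2, and let μ_1, …, μ_k > 0 with Σ_i μ_i = 1. Let p_1, …, p_k ∈ ℝ², p_i = (x_i, y_i), be pairwise distinct and satisfy the anisotropic central configuration equations: for every i, a x_i = Σ_{j≠i} μ_j (x_i − x_j)/r_{ij}³ and b y_i = Σ_{j≠i} μ_j (y_i − y_j)/r_{ij}³, where r_{ij} = |p_i − p_j|. Let R = max_i |p_i|. Then for all i ≠ j, r_{ij} ≥ μ_i μ_j / (max{a, b} · R²). -/
import Mathlib


open Finset

abbrev E2 : Type := EuclideanSpace ℝ (Fin 2)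

/-- The anisotropic central configuration equations for points `p_i = (x_i, y_i)`:
`a x_i = Σ_{j≠i} μ_j (x_i − x_j)/r_{ij}³` and `b y_i = Σ_{j≠i} μ_j (y_i − y_j)/r_{ij}³`. -/
def AnisoCC {k : ℕ} (a b : ℝ) (μ : Fin k → ℝ) (p : Fin k → E2) : Prop :=
  ∀ i, (a * p i 0 = ∑ j ∈ Finset.univ.filter (· ≠ i), μ j * (p i 0 - p j 0) / ‖p i - p j‖ ^ 3) ∧
       (b * p i 1 = ∑ j ∈ Finset.univ.filter (· ≠ i), μ j * (p i 1 - p j 1) / ‖p i - p j‖ ^ 3)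

/-- lower bound for mutual distances in an anisotropic central
configuration with `a, b > 0` and total mass `1`, where `R = max_i |p_i|`. -/
theorem stmt12 (k : ℕ) (hk : 2 ≤ k) (a b : ℝ) (ha : 0 < a) (hb : 0 < b)
    (μ : Fin k → ℝ) (hμ : ∀ i, 0 < μ i) (hμsum : ∑ i, μ i = 1)
    (p : Fin k → E2) (hinj : Function.Injective p) (hcc : AnisoCC a b μ p)
    (R : ℝ) (hR : IsGreatest (Set.range fun i => ‖p i‖) R) :
    ∀ i j, i ≠ j → μ i * μ j / (max a b * R ^ 2) ≤ ‖p i - p j‖ := by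
  intro i j hij
  have hd : ∀ i' j' : Fin k, i' ≠ j' → 0 < ‖p i' - p j'‖ := by
    intro i' j' h
    rw [norm_pos_iff, sub_ne_zero]
    exact fun he => h (hinj he)
  have hub : ∀ i', ‖p i'‖ ≤ R := fun i' => hR.2 ⟨i', rfl⟩
  have hRpos : 0 < R := by
    by_contra h
    push_neg at h
    have h1 : ‖p i‖ = 0 := le_antisymm (le_trans (hub i) h) (norm_nonneg _)
    have h2 : ‖p j‖ = 0 := le_antisymm (le_trans (hub j) h) (norm_nonneg _)
    rw [norm_eq_zero] at h1 h2
    exact hij (hinj (h1.trans h2.symm))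
  set M := max a b with hM
  have hMpos : 0 < M := lt_max_of_lt_left ha
  have hsq : ∀ v : E2, ‖v‖ ^ 2 = v 0 ^ 2 + v 1 ^ 2 := by
    intro v
    rw [EuclideanSpace.norm_eq, Real.sq_sqrt (by positivity)]
    simp [Fin.sum_univ_two, sq]
  have hsub : ∀ (i' j' : Fin k) (l : Fin 2), (p i' - p j') l = p i' l - p j' l :=
    fun _ _ _ => rfl
  set f : Fin k → Fin k → ℝ := fun i' j' =>
    μ i' * μ j' * ((p i' 0 - p j' 0) * p i' 0 + (p i' 1 - p j' 1) * p i' 1) / ‖p i' - p j'‖ ^ 3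
    with hf
  -- Step 1: weighted sum of the equations
  have step1 : ∑ i', μ i' * (a * p i' 0 ^ 2 + b * p i' 1 ^ 2)
      = ∑ i', ∑ j' ∈ Finset.univ.filter (· ≠ i'), f i' j' := by
    refine Finset.sum_congr rfl fun i' _ => ?_
    have h1 := (hcc i').1
    have h2 := (hcc i').2
    have e : μ i' * (a * p i' 0 ^ 2 + b * p i' 1 ^ 2)
        = (a * p i' 0) * (μ i' * p i' 0) + (b * p i' 1) * (μ i' * p i' 1) := by ring
    rw [e, h1, h2, Finset.sum_mul, Finset.sum_mul, ← Finset.sum_add_distrib]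
    refine Finset.sum_congr rfl fun j' hj' => ?_
    have hne : i' ≠ j' := fun h => (Finset.mem_filter.mp hj').2 h.symm
    have hr := hd i' j' hne
    simp only [hf]
    field_simp
  -- swap identity
  have swap : ∑ i', ∑ j' ∈ Finset.univ.filter (· ≠ i'), f i' j'
      = ∑ i', ∑ j' ∈ Finset.univ.filter (· ≠ i'), f j' i' := by
    rw [Finset.sum_comm' (t' := Finset.univ)
      (s' := fun j' => Finset.univ.filter (· ≠ j')) (by intro x y; simp [ne_comm])]
  -- Step 2: symmetrization
  have step2 : (2:ℝ) * ∑ i', ∑ j' ∈ Finset.univ.filter (· ≠ i'), f i' j'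
      = ∑ i', ∑ j' ∈ Finset.univ.filter (· ≠ i'), μ i' * μ j' / ‖p i' - p j'‖ := by
    rw [two_mul]
    nth_rewrite 2 [swap]
    rw [← Finset.sum_add_distrib]
    refine Finset.sum_congr rfl fun i' _ => ?_
    rw [← Finset.sum_add_distrib]
    refine Finset.sum_congr rfl fun j' hj' => ?_
    have hne : i' ≠ j' := fun h => (Finset.mem_filter.mp hj').2 h.symm
    have hr := hd i' j' hne
    have hrev : ‖p j' - p i'‖ = ‖p i' - p j'‖ := norm_sub_rev _ _
    have hr2 : ‖p i' - p j'‖ ^ 2 = (p i' 0 - p j' 0) ^ 2 + (p i' 1 - p j' 1) ^ 2 := by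
      rw [hsq, hsub, hsub]
    have e : f i' j' + f j' i'
        = μ i' * μ j' * ‖p i' - p j'‖ ^ 2 / ‖p i' - p j'‖ ^ 3 := by
      simp only [hf, hrev, hr2]; ring
    rw [e]
    field_simp
  -- Step 4: upper bound
  have step4 : ∑ i', μ i' * (a * p i' 0 ^ 2 + b * p i' 1 ^ 2) ≤ M * R ^ 2 := by
    calc ∑ i', μ i' * (a * p i' 0 ^ 2 + b * p i' 1 ^ 2)
        ≤ ∑ i', μ i' * (M * R ^ 2) := by
          refine Finset.sum_le_sum fun i' _ => ?_
          have h1 : a ≤ M := le_max_left a b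
          have h2 : b ≤ M := le_max_right a b
          have hn : p i' 0 ^ 2 + p i' 1 ^ 2 ≤ R ^ 2 := by
            rw [← hsq (p i')]
            exact pow_le_pow_left₀ (norm_nonneg _) (hub i') 2
          have h3 : a * p i' 0 ^ 2 + b * p i' 1 ^ 2 ≤ M * R ^ 2 := by
            nlinarith [sq_nonneg (p i' 0), sq_nonneg (p i' 1)]
          exact mul_le_mul_of_nonneg_left h3 (hμ i').le
      _ = M * R ^ 2 := by rw [← Finset.sum_mul, hμsum, one_mul]
  -- extraction of the (i,j) terms
  set S : Fin k → ℝ := fun i' => ∑ j' ∈ Finset.univ.filter (· ≠ i'), μ i' * μ j' / ‖p i' - p j'‖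
    with hS
  have hterm : ∀ i' j' : Fin k, j' ≠ i' →
      0 ≤ μ i' * μ j' / ‖p i' - p j'‖ := by
    intro i' j' h
    have := hd i' j' (fun e => h e.symm)
    have := (hμ i').le
    have := (hμ j').le
    positivity
  have hSnn : ∀ i', 0 ≤ S i' := by
    intro i'
    refine Finset.sum_nonneg fun j' hj' => hterm i' j' (Finset.mem_filter.mp hj').2
  have htermi : μ i * μ j / ‖p i - p j‖ ≤ S i := by
    refine Finset.single_le_sum (fun j' hj' => hterm i j' (Finset.mem_filter.mp hj').2) ?_
    simp [Ne.symm hij]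
  have htermj : μ j * μ i / ‖p j - p i‖ ≤ S j := by
    refine Finset.single_le_sum (fun j' hj' => hterm j j' (Finset.mem_filter.mp hj').2) ?_
    simp [hij]
  have hsumS : S i + S j ≤ ∑ i', S i' := by
    have h := Finset.sum_le_sum_of_subset_of_nonneg
      (Finset.subset_univ ({i, j} : Finset (Fin k))) (fun i' _ _ => hSnn i')
    rwa [Finset.sum_pair hij] at h
  have hrev : ‖p j - p i‖ = ‖p i - p j‖ := norm_sub_rev _ _
  have hkey : μ i * μ j / ‖p i - p j‖ ≤ M * R ^ 2 := by
    have h2 : (2:ℝ) * (μ i * μ j / ‖p i - p j‖) ≤ ∑ i', S i' := by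
      rw [hrev, mul_comm (μ j)] at htermj
      linarith
    have h3 : ∑ i', S i' ≤ 2 * (M * R ^ 2) := by
      rw [← step2, ← step1] at *
      linarith
    linarith
  have hdij := hd i j hij
  rw [div_le_iff₀ hdij] at hkey
  rw [div_le_iff₀ (by positivity : (0:ℝ) < M * R ^ 2)]
  nlinarith [hdij]
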